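/- arXiv:2405.20108 — 4 statements merged into one kernel-verified Lean document; each statement's English description precedes it below -/
import Mathlib

section
/- Let f : ℂ → ℂ belong to OM₊ and suppose f is not identically zero on the slit plane ℂ ∖ (−∞,0]. Then for every z ∈ ℂ ∖ (−∞,0] one has conj(f(conj z)) = f(z) and f(z) ≠ 0. -/
open Complex MeasureTheory Filter
open scoped Topology

noncomputable section

/-- The open horizontal strip `D = {w : ℂ | -π < Im w < π}`. -/
def strip : Set ℂ := {w : ℂ | -Real.pi < w.im ∧ w.im < Real.pi}

/-- The class `OM₊`: functions analytic on the slit plane `ℂ \ (-∞,0]`,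
nonnegative real on the positive real axis, with nonnegative imaginary part
on the upper half-plane. -/
def OMplus (f : ℂ → ℂ) : Prop :=
  DifferentiableOn ℂ f Complex.slitPlane ∧
  (∀ x : ℝ, 0 < x → ∃ t : ℝ, 0 ≤ t ∧ f (x : ℂ) = (t : ℂ)) ∧
  (∀ z : ℂ, 0 < z.im → 0 ≤ (f z).im)

private lemma isPreconnected_slitPlane' : IsPreconnected Complex.slitPlane := by
  have : IsPathConnected Complex.slitPlane :=
    ⟨1, Complex.one_mem_slitPlane, fun {y} hy =>
      JoinedIn.of_segment_subset (Complex.starConvex_one_slitPlane.segment_subset hy)⟩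
  exact this.isConnected.isPreconnected

private lemma slit_conj {z : ℂ} (hz : z ∈ Complex.slitPlane) :
    (starRingEnd ℂ) z ∈ Complex.slitPlane := by
  rw [Complex.mem_slitPlane_iff] at hz ⊢
  rcases hz with h | h
  · exact Or.inl (by simpa using h)
  · exact Or.inr (by simpa using h)

private lemma hasDerivAt_conj_conj {f : ℂ → ℂ} {w c : ℂ} (h : HasDerivAt f c w) :
    HasDerivAt (fun z => (starRingEnd ℂ) (f ((starRingEnd ℂ) z))) ((starRingEnd ℂ) c)
      ((starRingEnd ℂ) w) := by
  rw [hasDerivAt_iff_tendsto_slope] at h ⊢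
  have h1 : Tendsto (starRingEnd ℂ) (𝓝 ((starRingEnd ℂ) w)) (𝓝 w) := by
    simpa using Complex.continuous_conj.tendsto ((starRingEnd ℂ) w)
  have h2 : Tendsto (starRingEnd ℂ) (𝓝[≠] ((starRingEnd ℂ) w)) (𝓝[≠] w) := by
    refine tendsto_nhdsWithin_of_tendsto_nhds_of_eventually_within _
      (h1.mono_left nhdsWithin_le_nhds) ?_
    filter_upwards [self_mem_nhdsWithin] with x hx
    simp only [Set.mem_compl_iff, Set.mem_singleton_iff] at hx ⊢
    intro hc
    exact hx (by rw [← hc]; exact (Complex.conj_conj x).symm)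
  have h3 := (Complex.continuous_conj.tendsto c).comp (h.comp h2)
  refine h3.congr fun z => ?_
  simp only [Function.comp_apply, slope_def_field, map_div₀, map_sub, Complex.conj_conj]

private lemma diffOn_reflect {f : ℂ → ℂ} (hf : DifferentiableOn ℂ f Complex.slitPlane) :
    DifferentiableOn ℂ (fun z => (starRingEnd ℂ) (f ((starRingEnd ℂ) z)))
      Complex.slitPlane := by
  intro z hz
  have hz' := slit_conj hz
  have hd : DifferentiableAt ℂ f ((starRingEnd ℂ) z) :=
    hf.differentiableAt (Complex.isOpen_slitPlane.mem_nhds hz')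
  have h := hasDerivAt_conj_conj hd.hasDerivAt
  rw [Complex.conj_conj] at h
  exact h.differentiableAt.differentiableWithinAt

private lemma reflect_eq {f : ℂ → ℂ} (hf : OMplus f) :
    Set.EqOn (fun z => (starRingEnd ℂ) (f ((starRingEnd ℂ) z))) f Complex.slitPlane := by
  have hA : AnalyticOnNhd ℂ f Complex.slitPlane :=
    hf.1.analyticOnNhd Complex.isOpen_slitPlane
  have hB : AnalyticOnNhd ℂ (fun z => (starRingEnd ℂ) (f ((starRingEnd ℂ) z)))
      Complex.slitPlane := (diffOn_reflect hf.1).analyticOnNhd Complex.isOpen_slitPlane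
  have key : ∀ x : ℝ, 0 < x →
      (starRingEnd ℂ) (f ((starRingEnd ℂ) (x : ℂ))) = f (x : ℂ) := by
    intro x hx
    obtain ⟨t, _, ht⟩ := hf.2.1 x hx
    rw [Complex.conj_ofReal, ht, Complex.conj_ofReal]
  have t1 : Tendsto (fun k : ℕ => (1 + 1 / (k + 1) : ℝ)) atTop (𝓝 1) := by
    have := tendsto_one_div_add_atTop_nhds_zero_nat (𝕜 := ℝ)
    simpa using tendsto_const_nhds.add this
  have t2 : Tendsto (fun k : ℕ => ((1 + 1 / (k + 1) : ℝ) : ℂ)) atTop (𝓝 (1 : ℂ)) := by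
    have h := (Complex.continuous_ofReal.tendsto 1).comp t1
    rw [Complex.ofReal_one] at h
    exact h
  have t3 : Tendsto (fun k : ℕ => ((1 + 1 / (k + 1) : ℝ) : ℂ)) atTop (𝓝[≠] (1 : ℂ)) := by
    refine tendsto_nhdsWithin_of_tendsto_nhds_of_eventually_within _ t2
      (Filter.Eventually.of_forall fun k => ?_)
    simp only [Set.mem_compl_iff, Set.mem_singleton_iff]
    intro hc
    have h1 : (1 + 1 / (k + 1) : ℝ) = 1 := by exact_mod_cast hc
    have h2 : (0 : ℝ) < 1 / (k + 1) := by positivity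
    linarith
  apply hB.eqOn_of_preconnected_of_frequently_eq hA isPreconnected_slitPlane'
    Complex.one_mem_slitPlane
  apply t3.frequently
  apply Filter.Eventually.frequently
  apply Filter.Eventually.of_forall
  intro k
  exact key (1 + 1 / (k + 1)) (by positivity)

private lemma upper_ne_zero {f : ℂ → ℂ} (hf : OMplus f)
    (hne : ∃ z ∈ Complex.slitPlane, f z ≠ 0) :
    ∀ z : ℂ, 0 < z.im → f z ≠ 0 := by
  intro z₀ hz₀ hfz
  set H : Set ℂ := {z : ℂ | 0 < z.im} with hH
  have hHopen : IsOpen H := isOpen_lt continuous_const Complex.continuous_im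
  have hHslit : H ⊆ Complex.slitPlane := fun z hz => Or.inr (ne_of_gt hz)
  have hA : AnalyticOnNhd ℂ f H := (hf.1.mono hHslit).analyticOnNhd hHopen
  have hHpre : IsPreconnected H := by
    have : Convex ℝ H := convex_halfSpace_im_gt 0
    exact (this.isPathConnected ⟨Complex.I, by simp [hH]⟩).isConnected.isPreconnected
  rcases hA.is_constant_or_isOpen hHpre with ⟨w, hw⟩ | hopen
  · -- f is constant on H, hence constant 0 on the slit plane, contradiction
    have hw0 : w = 0 := by rw [← hw z₀ hz₀]; exact hfz
    have hAs : AnalyticOnNhd ℂ f Complex.slitPlane :=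
      hf.1.analyticOnNhd Complex.isOpen_slitPlane
    have hev : ∀ᶠ z in 𝓝 z₀, f z = 0 := by
      filter_upwards [hHopen.mem_nhds hz₀] with x hx
      rw [hw x hx, hw0]
    have heq := hAs.eqOn_zero_of_preconnected_of_eventuallyEq_zero
      isPreconnected_slitPlane' (hHslit hz₀) hev
    obtain ⟨z₁, hz₁, hfz₁⟩ := hne
    exact hfz₁ (heq hz₁)
  · -- f is open on H, so f(H) contains points with negative imaginary part
    have hopenim : IsOpen (f '' H) := hopen H subset_rfl hHopen
    have h0mem : (0 : ℂ) ∈ f '' H := ⟨z₀, hz₀, hfz⟩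
    obtain ⟨ε, hε, hball⟩ := Metric.isOpen_iff.mp hopenim 0 h0mem
    have hpmem : ((-(ε / 2) : ℝ) : ℂ) * Complex.I ∈ Metric.ball (0 : ℂ) ε := by
      rw [Metric.mem_ball, dist_zero_right, norm_mul, Complex.norm_real, Complex.norm_I, Real.norm_eq_abs]
      rw [abs_neg, abs_of_pos (by linarith)]
      linarith
    obtain ⟨z₁, hz₁H, hz₁eq⟩ := hball hpmem
    have him : (f z₁).im = -(ε / 2) := by
      rw [hz₁eq]; simp
    have := hf.2.2 z₁ hz₁H
    rw [him] at this
    linarith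

private lemma pos_real_ne_zero {f : ℂ → ℂ} (hf : OMplus f)
    (hne : ∃ z ∈ Complex.slitPlane, f z ≠ 0) :
    ∀ x : ℝ, 0 < x → f (x : ℂ) ≠ 0 := by
  intro x₀ hx₀ hfx₀
  have hz₀ : (x₀ : ℂ) ∈ Complex.slitPlane := Complex.ofReal_mem_slitPlane.2 hx₀
  have hA : AnalyticOnNhd ℂ f Complex.slitPlane :=
    hf.1.analyticOnNhd Complex.isOpen_slitPlane
  have hAx : AnalyticAt ℂ f (x₀ : ℂ) := hA _ hz₀
  have hord : analyticOrderAt f (x₀ : ℂ) ≠ ⊤ := by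
    intro htop
    have hev := analyticOrderAt_eq_top.mp htop
    have heq := hA.eqOn_zero_of_preconnected_of_eventuallyEq_zero
      isPreconnected_slitPlane' hz₀ hev
    obtain ⟨z₁, hz₁, hfz₁⟩ := hne
    exact hfz₁ (heq hz₁)
  obtain ⟨n, hn⟩ := WithTop.ne_top_iff_exists.mp hord
  obtain ⟨g, hg, hg0, hfg⟩ := (hAx.analyticOrderAt_eq_natCast (n := n)).mp hn.symm
  set a := g (x₀ : ℂ) with ha
  have hgc : ContinuousAt g (x₀ : ℂ) := hg.continuousAt
  have hn0 : n ≠ 0 := by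
    intro h0
    apply hg0
    have := hfg.self_of_nhds
    rw [h0] at this
    simpa [hfx₀] using this.symm
  -- paths approaching x₀ from direction v
  have hpath : ∀ v : ℂ,
      Tendsto (fun r : ℝ => (x₀ : ℂ) + (r : ℂ) * v) (𝓝[>] (0 : ℝ)) (𝓝 (x₀ : ℂ)) := by
    intro v
    have hc : Continuous (fun r : ℝ => (x₀ : ℂ) + (r : ℂ) * v) := by
      continuity
    have := hc.tendsto 0
    simp only [Complex.ofReal_zero, zero_mul, add_zero] at this
    exact this.mono_left nhdsWithin_le_nhds
  have hgpath : ∀ v : ℂ,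
      Tendsto (fun r : ℝ => g ((x₀ : ℂ) + (r : ℂ) * v)) (𝓝[>] (0 : ℝ)) (𝓝 a) :=
    fun v => hgc.tendsto.comp (hpath v)
  have hfev : ∀ v : ℂ, ∀ᶠ r : ℝ in 𝓝[>] (0 : ℝ),
      f ((x₀ : ℂ) + (r : ℂ) * v) = ((r : ℂ) * v) ^ n * g ((x₀ : ℂ) + (r : ℂ) * v) := by
    intro v
    filter_upwards [(hpath v).eventually hfg] with r hr
    simpa using hr
  rcases eq_or_ne n 1 with hn1 | hn1
  · -- order 1 : look along the real axis on both sides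
    subst hn1
    -- right side: g values are nonnegative reals
    have hright : ∀ᶠ r : ℝ in 𝓝[>] (0 : ℝ),
        (g ((x₀ : ℂ) + (r : ℂ) * 1)).im = 0 ∧ 0 ≤ (g ((x₀ : ℂ) + (r : ℂ) * 1)).re := by
      filter_upwards [hfev 1, self_mem_nhdsWithin] with r hr hrpos
      rw [Set.mem_Ioi] at hrpos
      obtain ⟨t, ht0, ht⟩ := hf.2.1 (x₀ + r) (by linarith)
      have hcast : ((x₀ + r : ℝ) : ℂ) = (x₀ : ℂ) + (r : ℂ) * 1 := by push_cast; ring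
      rw [hcast] at ht
      have hfr : ((r : ℂ)) * g ((x₀ : ℂ) + (r : ℂ) * 1) = (t : ℂ) := by
        rw [← ht, hr]; ring
      have him : r * (g ((x₀ : ℂ) + (r : ℂ) * 1)).im = 0 := by
        have := congrArg Complex.im hfr
        simpa using this
      have hre : r * (g ((x₀ : ℂ) + (r : ℂ) * 1)).re = t := by
        have := congrArg Complex.re hfr
        simpa using this
      constructor
      · have := mul_eq_zero.mp him
        rcases this with h | h
        · exact absurd h (ne_of_gt hrpos)
        · exact h
      · by_contra hcon
        push_neg at hcon
        nlinarith
    have hleft : ∀ᶠ r : ℝ in 𝓝[>] (0 : ℝ),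
        (g ((x₀ : ℂ) + (r : ℂ) * (-1))).re ≤ 0 := by
      have hIoo : Set.Ioo (0 : ℝ) x₀ ∈ 𝓝[>] (0 : ℝ) :=
        Ioo_mem_nhdsGT_of_mem ⟨le_refl 0, hx₀⟩
      filter_upwards [hfev (-1), hIoo] with r hr hrmem
      obtain ⟨hrpos, hrlt⟩ := hrmem
      obtain ⟨t, ht0, ht⟩ := hf.2.1 (x₀ - r) (by linarith)
      have hcast : ((x₀ - r : ℝ) : ℂ) = (x₀ : ℂ) + (r : ℂ) * (-1) := by push_cast; ring
      rw [hcast] at ht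
      have hfr : -((r : ℂ)) * g ((x₀ : ℂ) + (r : ℂ) * (-1)) = (t : ℂ) := by
        rw [← ht, hr]; ring
      have hre : -(r * (g ((x₀ : ℂ) + (r : ℂ) * (-1))).re) = t := by
        have := congrArg Complex.re hfr
        simpa using this
      nlinarith
    -- take limits
    have hlim1 : Tendsto (fun r : ℝ => (g ((x₀ : ℂ) + (r : ℂ) * 1)).im)
        (𝓝[>] (0 : ℝ)) (𝓝 a.im) := (Complex.continuous_im.tendsto a).comp (hgpath 1)
    have hlim2 : Tendsto (fun r : ℝ => (g ((x₀ : ℂ) + (r : ℂ) * 1)).re)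
        (𝓝[>] (0 : ℝ)) (𝓝 a.re) := (Complex.continuous_re.tendsto a).comp (hgpath 1)
    have hlim3 : Tendsto (fun r : ℝ => (g ((x₀ : ℂ) + (r : ℂ) * (-1))).re)
        (𝓝[>] (0 : ℝ)) (𝓝 a.re) := (Complex.continuous_re.tendsto a).comp (hgpath (-1))
    have haim : a.im = 0 := by
      have th : Tendsto (fun _ : ℝ => (0 : ℝ)) (𝓝[>] (0 : ℝ)) (𝓝 a.im) :=
        hlim1.congr' (hright.mono fun r hr => hr.1)
      exact tendsto_nhds_unique th tendsto_const_nhds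
    have hare1 : 0 ≤ a.re :=
      ge_of_tendsto hlim2 (hright.mono fun r hr => hr.2)
    have hare2 : a.re ≤ 0 := le_of_tendsto hlim3 hleft
    apply hg0
    rw [← ha] at *
    exact Complex.ext (le_antisymm hare2 hare1) haim
  · -- order n ≥ 2
    have hn2 : 2 ≤ n := by omega
    -- Claim C: for every direction in the open upper half plane the limit has
    -- nonnegative imaginary part
    have claimC : ∀ θ : ℝ, 0 < θ → θ < Real.pi →
        0 ≤ ((Complex.exp ((θ : ℂ) * Complex.I)) ^ n * a).im := by
      intro θ hθ0 hθπ
      set v : ℂ := Complex.exp ((θ : ℂ) * Complex.I) with hv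
      have hsin : 0 < Real.sin θ := Real.sin_pos_of_pos_of_lt_pi hθ0 hθπ
      have hvim : v.im = Real.sin θ := by
        rw [hv, Complex.exp_mul_I]
        simp [← Complex.ofReal_cos, ← Complex.ofReal_sin]
      have hev : ∀ᶠ r : ℝ in 𝓝[>] (0 : ℝ),
          0 ≤ (v ^ n * g ((x₀ : ℂ) + (r : ℂ) * v)).im := by
        filter_upwards [hfev v, self_mem_nhdsWithin] with r hr hrpos
        rw [Set.mem_Ioi] at hrpos
        have hzim : ((x₀ : ℂ) + (r : ℂ) * v).im = r * Real.sin θ := by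
          simp [Complex.add_im, Complex.mul_im, hvim]
        have hzpos : 0 < ((x₀ : ℂ) + (r : ℂ) * v).im := by
          rw [hzim]; positivity
        have him := hf.2.2 _ hzpos
        rw [hr] at him
        have hsplit : ((r : ℂ) * v) ^ n * g ((x₀ : ℂ) + (r : ℂ) * v) =
            ((r ^ n : ℝ) : ℂ) * (v ^ n * g ((x₀ : ℂ) + (r : ℂ) * v)) := by
          push_cast; ring
        rw [hsplit] at him
        simp only [Complex.mul_im, Complex.ofReal_re, Complex.ofReal_im, zero_mul,
          add_zero] at him
        have hrn : 0 < r ^ n := pow_pos hrpos n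
        rw [Complex.mul_im]
        nlinarith
      have hlim : Tendsto (fun r : ℝ => (v ^ n * g ((x₀ : ℂ) + (r : ℂ) * v)).im)
          (𝓝[>] (0 : ℝ)) (𝓝 ((v ^ n * a).im)) := by
        have h1 : Tendsto (fun r : ℝ => v ^ n * g ((x₀ : ℂ) + (r : ℂ) * v))
            (𝓝[>] (0 : ℝ)) (𝓝 (v ^ n * a)) := tendsto_const_nhds.mul (hgpath v)
        exact (Complex.continuous_im.tendsto _).comp h1
      exact ge_of_tendsto hlim hev
    -- Find a bad direction
    set w : ℂ := Complex.exp (((Real.pi / 4 : ℝ) : ℂ) * Complex.I) * a with hw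
    have hw0 : w ≠ 0 := mul_ne_zero (Complex.exp_ne_zero _) hg0
    have hkey : ∃ k : ℕ, k < 4 ∧ (Complex.I ^ k * w).im < 0 := by
      by_contra hc
      push_neg at hc
      have h0 := hc 0 (by norm_num)
      have h1 := hc 1 (by norm_num)
      have h2 := hc 2 (by norm_num)
      have h3 := hc 3 (by norm_num)
      simp only [pow_zero, pow_one, one_mul] at h0 h1 h2 h3
      rw [show (Complex.I : ℂ) ^ 2 = -1 by simp [Complex.I_sq]] at h2
      rw [show (Complex.I : ℂ) ^ 3 = -Complex.I by
        rw [pow_succ, Complex.I_sq]; ring] at h3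
      simp only [neg_mul, Complex.neg_im, Complex.mul_im, Complex.I_re, Complex.I_im,
        zero_mul, one_mul, zero_add] at h1 h2 h3
      apply hw0
      apply Complex.ext <;> simp <;> linarith
    obtain ⟨k, hk4, hkneg⟩ := hkey
    set θ : ℝ := (Real.pi / 4 + k * (Real.pi / 2)) / n with hθ
    have hπ := Real.pi_pos
    have hθ0 : 0 < θ := by
      rw [hθ]
      apply div_pos
      · positivity
      · exact_mod_cast Nat.pos_of_ne_zero hn0
    have hθπ : θ < Real.pi := by
      rw [hθ, div_lt_iff₀ (by exact_mod_cast Nat.pos_of_ne_zero hn0)]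
      have hk3 : (k : ℝ) ≤ 3 := by exact_mod_cast Nat.lt_succ_iff.mp hk4
      have hn2' : (2 : ℝ) ≤ n := by exact_mod_cast hn2
      nlinarith
    have hexp : (Complex.exp ((θ : ℂ) * Complex.I)) ^ n =
        Complex.exp (((Real.pi / 4 : ℝ) : ℂ) * Complex.I) * Complex.I ^ k := by
      rw [← Complex.exp_nat_mul]
      have hnθ : (n : ℂ) * ((θ : ℂ) * Complex.I) =
          ((Real.pi / 4 : ℝ) : ℂ) * Complex.I + (k : ℂ) * (((Real.pi / 2 : ℝ) : ℂ) * Complex.I) := by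
        have hnne : (n : ℝ) ≠ 0 := by exact_mod_cast hn0
        have : (n : ℝ) * θ = Real.pi / 4 + k * (Real.pi / 2) := by
          rw [hθ]; field_simp
        calc (n : ℂ) * ((θ : ℂ) * Complex.I) = (((n : ℝ) * θ : ℝ) : ℂ) * Complex.I := by
              push_cast; ring
          _ = ((Real.pi / 4 + k * (Real.pi / 2) : ℝ) : ℂ) * Complex.I := by rw [this]
          _ = _ := by push_cast; ring
      rw [hnθ, Complex.exp_add, Complex.exp_nat_mul]
      congr 1
      congr 1
      rw [Complex.exp_mul_I]
      simp [← Complex.ofReal_cos, ← Complex.ofReal_sin]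
    have hC := claimC θ hθ0 hθπ
    rw [hexp] at hC
    have : (Complex.exp (((Real.pi / 4 : ℝ) : ℂ) * Complex.I) * Complex.I ^ k) * a =
        Complex.I ^ k * w := by rw [hw]; ring
    rw [this] at hC
    linarith

/-- For `f ∈ OM₊` not identically zero on the slit plane,
`conj (f (conj z)) = f z` and `f z ≠ 0` for every `z` in the slit plane. -/
theorem stmt_0 (f : ℂ → ℂ) (hf : OMplus f)
    (hne : ∃ z ∈ Complex.slitPlane, f z ≠ 0) :
    ∀ z ∈ Complex.slitPlane,
      (starRingEnd ℂ) (f ((starRingEnd ℂ) z)) = f z ∧ f z ≠ 0 := by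
  have hrefl := reflect_eq hf
  intro z hz
  refine ⟨hrefl hz, ?_⟩
  rcases lt_trichotomy z.im 0 with him | him | him
  · -- lower half plane: use reflection and the upper half plane case
    have h1 : f ((starRingEnd ℂ) z) ≠ 0 :=
      upper_ne_zero hf hne _ (by simpa using neg_pos.2 him)
    intro h0
    apply h1
    have h2 := hrefl hz
    rw [h0] at h2
    have := congrArg (starRingEnd ℂ) h2
    simpa using this
  · -- positive real axis
    have hre : 0 < z.re := by
      rw [Complex.mem_slitPlane_iff] at hz
      rcases hz with h | h
      · exact h
      · exact absurd him h
    have hz' : z = (z.re : ℂ) := by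
      apply Complex.ext
      · simp
      · simp [him]
    rw [hz']
    exact pos_real_ne_zero hf hne z.re hre
  · exact upper_ne_zero hf hne z him
end
end

section
/- For every real c > 1, the set M_c of Molnár functions of type c is infinite; in particular, the Molnár class M is infinite. -/
open Complex MeasureTheory Filter

noncomputable section

/-- The Molnár class `M_c` of functions of type `c`. -/
def Mclass (c : ℝ) (f : ℂ → ℂ) : Prop :=
  OMplus f ∧ f 1 = 1 ∧
  (∀ x : ℝ, 0 < x → f (x : ℂ) = (x : ℂ) * f ((x : ℂ)⁻¹)) ∧
  (∀ x : ℝ, 0 < x → f ((c ^ 2 * x : ℝ) : ℂ) = (c : ℂ) * f (x : ℂ))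

namespace MolnarAux

noncomputable def F (c ε : ℝ) (z : ℂ) : ℂ :=
  Complex.exp ((((1:ℝ)/2 : ℝ) : ℂ) * Complex.log z +
    (ε : ℂ) * (Complex.cos ((Real.pi : ℂ) * Complex.log z / (Real.log c : ℂ)) - 1))

noncomputable def eps0 (c : ℝ) : ℝ :=
  Real.log c / (2 * Real.pi * Real.cosh (Real.pi ^ 2 / Real.log c))

lemma eps0_pos {c : ℝ} (hc : 1 < c) : 0 < eps0 c :=
  div_pos (Real.log_pos hc) (by positivity)

lemma F_real (c ε : ℝ) {x : ℝ} (hx : 0 < x) :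
    F c ε x = ((Real.exp (1/2 * Real.log x +
      ε * (Real.cos (Real.pi * Real.log x / Real.log c) - 1)) : ℝ) : ℂ) := by
  unfold F
  rw [← Complex.ofReal_log hx.le]
  push_cast
  ring_nf

lemma cos_im' (a b : ℝ) : (Complex.cos (↑a + ↑b * I)).im = -(Real.sin a * Real.sinh b) := by
  rw [Complex.cos_add_mul_I]
  simp [Complex.sin_ofReal_re, Complex.sinh_ofReal_re]

lemma sinh_le_mul_cosh {x : ℝ} (hx : 0 ≤ x) : Real.sinh x ≤ x * Real.cosh x := by
  have hmono : MonotoneOn (fun y : ℝ => y * Real.cosh y - Real.sinh y) (Set.Ici 0) := by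
    apply monotoneOn_of_deriv_nonneg (convex_Ici 0)
    · fun_prop
    · fun_prop
    · intro y hy
      rw [interior_Ici] at hy
      have h1 : HasDerivAt (fun y : ℝ => y * Real.cosh y - Real.sinh y)
          (1 * Real.cosh y + y * Real.sinh y - Real.cosh y) y :=
        ((hasDerivAt_id y).mul (Real.hasDerivAt_cosh y)).sub (Real.hasDerivAt_sinh y)
      rw [h1.deriv]
      nlinarith [mul_pos (Set.mem_Ioi.mp hy) (Real.sinh_pos_iff.2 (Set.mem_Ioi.mp hy))]
  have := hmono (Set.self_mem_Ici) (Set.mem_Ici.2 hx) hx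
  simp at this
  linarith

lemma im_nonneg {c : ℝ} (hc : 1 < c) {ε : ℝ} (hε0 : 0 ≤ ε) (hε1 : ε ≤ eps0 c)
    {z : ℂ} (hz : 0 < z.im) : 0 ≤ (F c ε z).im := by
  set L := Real.log c with hLdef
  have hL : 0 < L := Real.log_pos hc
  set t := (Complex.log z).im with htdef
  have ht0 : 0 ≤ t := by
    rw [htdef, Complex.log_im]; exact Complex.arg_nonneg_iff.2 hz.le
  have htpi : t ≤ Real.pi := Complex.log_im_le_pi z
  set a := Real.pi * (Complex.log z).re / L with hadef
  set b := Real.pi * t / L with hbdef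
  have hb0 : 0 ≤ b := by positivity
  have hw : (Real.pi : ℂ) * Complex.log z / (L : ℂ) = ↑a + ↑b * I := by
    rw [hadef, hbdef, ← Complex.re_add_im (Complex.log z)]
    push_cast
    rw [← htdef]
    field_simp
    simp only [Complex.add_re, Complex.ofReal_re, Complex.mul_re, Complex.I_re, Complex.I_im,
      Complex.ofReal_im, mul_zero, zero_mul, sub_zero, add_zero]
  set C := Real.cosh (Real.pi ^ 2 / L) with hCdef
  have hC0 : 0 < C := Real.cosh_pos _
  have hsh0 : 0 ≤ Real.sinh b := Real.sinh_nonneg_iff.2 hb0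
  have hkey : ε * Real.sinh b ≤ t / 2 := by
    have h1 : Real.sinh b ≤ b * Real.cosh b := sinh_le_mul_cosh hb0
    have hbb : b ≤ Real.pi ^ 2 / L := by
      rw [hbdef, pow_two]
      gcongr
    have h2 : Real.cosh b ≤ C := by
      rw [hCdef, Real.cosh_le_cosh, _root_.abs_of_nonneg hb0, _root_.abs_of_nonneg (by positivity)]
      exact hbb
    have h3 : Real.sinh b ≤ b * C := h1.trans (by gcongr)
    have h4 : eps0 c * (b * C) = t / 2 := by
      rw [eps0, ← hLdef, hbdef, ← hCdef]
      field_simp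
    calc ε * Real.sinh b ≤ ε * (b * C) := by gcongr
      _ ≤ eps0 c * (b * C) := by gcongr
      _ = t / 2 := h4
  have him : ((((1:ℝ)/2 : ℝ) : ℂ) * Complex.log z +
      (ε : ℂ) * (Complex.cos ((Real.pi : ℂ) * Complex.log z / (L : ℂ)) - 1)).im
      = t / 2 - ε * (Real.sin a * Real.sinh b) := by
    rw [hw]
    simp only [Complex.add_im, Complex.mul_im, Complex.sub_im, Complex.one_im,
      Complex.ofReal_re, Complex.ofReal_im, cos_im']
    rw [← htdef]
    ring
  unfold F
  rw [← hLdef, Complex.exp_im, him]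
  apply mul_nonneg (Real.exp_nonneg _)
  apply Real.sin_nonneg_of_nonneg_of_le_pi
  · nlinarith [Real.sin_le_one a, Real.neg_one_le_sin a,
      mul_le_mul_of_nonneg_right (Real.sin_le_one a) hsh0]
  · nlinarith [Real.neg_one_le_sin a,
      mul_le_mul_of_nonneg_right (Real.neg_one_le_sin a) hsh0]

lemma mclass_F {c : ℝ} (hc : 1 < c) {ε : ℝ} (hε0 : 0 ≤ ε) (hε1 : ε ≤ eps0 c) :
    Mclass c (F c ε) := by
  have hc0 : (0:ℝ) < c := lt_trans one_pos hc
  have hL : 0 < Real.log c := Real.log_pos hc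
  refine ⟨⟨?_, ?_, ?_⟩, ?_, ?_, ?_⟩
  · -- differentiable
    intro z hz
    apply DifferentiableAt.differentiableWithinAt
    have hlog : DifferentiableAt ℂ Complex.log z := Complex.differentiableAt_log hz
    apply DifferentiableAt.cexp
    exact ((differentiableAt_const _).mul hlog).add
      ((differentiableAt_const _).mul
        ((((differentiableAt_const _).mul hlog).div_const _).ccos.sub
          (differentiableAt_const _)))
  · -- real nonneg on positive axis
    intro x hx
    exact ⟨_, Real.exp_nonneg _, F_real c ε hx⟩
  · -- Im nonneg
    intro z hz
    exact im_nonneg hc hε0 hε1 hz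
  · -- f 1 = 1
    have h := F_real c ε one_pos
    rw [Complex.ofReal_one] at h
    rw [h]
    simp [Real.log_one]
  · -- symmetry
    intro x hx
    have hxi : (0:ℝ) < x⁻¹ := by positivity
    rw [F_real c ε hx, show ((x:ℂ))⁻¹ = ((x⁻¹ : ℝ) : ℂ) by push_cast; ring,
      F_real c ε hxi]
    rw [← Complex.ofReal_mul]
    congr 1
    rw [Real.log_inv]
    have harg : Real.pi * (-Real.log x) / Real.log c
        = -(Real.pi * Real.log x / Real.log c) := by ring
    rw [harg, Real.cos_neg]
    rw [show 1/2 * Real.log x + ε * (Real.cos (Real.pi * Real.log x / Real.log c) - 1)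
        = Real.log x + (1/2 * -Real.log x
          + ε * (Real.cos (Real.pi * Real.log x / Real.log c) - 1)) from by ring,
      Real.exp_add, Real.exp_log hx]
  · -- scaling
    intro x hx
    have hcx : (0:ℝ) < c ^ 2 * x := by positivity
    rw [F_real c ε hcx, F_real c ε hx]
    have hlog : Real.log (c ^ 2 * x) = 2 * Real.log c + Real.log x := by
      rw [Real.log_mul (by positivity) hx.ne', Real.log_pow]
      push_cast; ring
    rw [hlog]
    have harg : Real.pi * (2 * Real.log c + Real.log x) / Real.log c
        = Real.pi * Real.log x / Real.log c + 2 * Real.pi := by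
      field_simp; ring
    rw [harg, Real.cos_add_two_pi]
    rw [← Complex.ofReal_mul]
    congr 1
    rw [show 1/2 * (2 * Real.log c + Real.log x)
          + ε * (Real.cos (Real.pi * Real.log x / Real.log c) - 1)
        = Real.log c + (1/2 * Real.log x
          + ε * (Real.cos (Real.pi * Real.log x / Real.log c) - 1)) from by ring,
      Real.exp_add, Real.exp_log hc0]

lemma key (c : ℝ) (hc : 1 < c) :
    {g : Complex.slitPlane → ℂ | ∃ f : ℂ → ℂ, Mclass c f ∧
      g = fun z => f z.1}.Infinite := by
  have hc0 : (0:ℝ) < c := lt_trans one_pos hc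
  have hL : 0 < Real.log c := Real.log_pos hc
  have hmem : (c : ℂ) ∈ Complex.slitPlane := Complex.ofReal_mem_slitPlane.2 hc0
  set Φ : ℝ → (Complex.slitPlane → ℂ) := fun ε => fun z => F c ε z.1 with hΦ
  have hinj : Set.InjOn Φ (Set.Icc 0 (eps0 c)) := by
    intro ε₁ h₁ ε₂ h₂ heq
    have h := congrFun heq ⟨(c : ℂ), hmem⟩
    simp only [hΦ] at h
    rw [F_real c ε₁ hc0, F_real c ε₂ hc0] at h
    have h' := Real.exp_eq_exp.mp (Complex.ofReal_inj.mp h)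
    have hpi : Real.pi * Real.log c / Real.log c = Real.pi := by field_simp
    rw [hpi, Real.cos_pi] at h'
    linarith
  have hsub : Φ '' (Set.Icc 0 (eps0 c)) ⊆
      {g : Complex.slitPlane → ℂ | ∃ f : ℂ → ℂ, Mclass c f ∧ g = fun z => f z.1} := by
    rintro g ⟨ε, hε, rfl⟩
    exact ⟨F c ε, mclass_F hc hε.1 hε.2, rfl⟩
  exact Set.Infinite.mono hsub
    ((Set.Icc_infinite (eps0_pos hc)).image hinj)

end MolnarAux

/-- For every `c > 1`, the class `M_c` is infinite (counting functions up to
equality on the slit plane, i.e. counting restrictions to the slit plane);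
in particular the Molnár class `M = ⋃_{c>0, c≠1} M_c` is infinite. -/
theorem stmt_7 :
    (∀ c : ℝ, 1 < c →
      {g : Complex.slitPlane → ℂ | ∃ f : ℂ → ℂ, Mclass c f ∧
        g = fun z => f z.1}.Infinite) ∧
    {g : Complex.slitPlane → ℂ | ∃ c : ℝ, 0 < c ∧ c ≠ 1 ∧ ∃ f : ℂ → ℂ,
      Mclass c f ∧ g = fun z => f z.1}.Infinite := by
  constructor
  · exact fun c hc => MolnarAux.key c hc
  · apply Set.Infinite.mono _ (MolnarAux.key 2 one_lt_two)
    rintro g ⟨f, hf, hg⟩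
    exact ⟨2, by norm_num, by norm_num, f, hf, hg⟩
end
end

section
/- Let c > 1 be real and let n be a nonzero integer. Then the function f_n defined on the slit plane by f_n(z) = √z · exp{ π·sin²(π·n·Log z / (2·log c)) / sinh(π²·n / log c) } belongs to M_c. In particular, f_n is not the principal square root function. -/
open Complex MeasureTheory Filter

noncomputable section

lemma aux_sinh_convex {l y : ℝ} (hl0 : 0 ≤ l) (hl1 : l ≤ 1) (hy : 0 ≤ y) :
    Real.sinh (l * y) ≤ l * Real.sinh y := by
  set h : ℝ → ℝ := fun t => l * Real.sinh t - Real.sinh (l * t) with hh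
  have hd : ∀ t : ℝ, HasDerivAt h (l * Real.cosh t - Real.cosh (l * t) * l) t := by
    intro t
    have h1 : HasDerivAt (fun t : ℝ => l * t) l t := by
      simpa using (hasDerivAt_id t).const_mul l
    exact ((Real.hasDerivAt_sinh t).const_mul l).sub
      ((Real.hasDerivAt_sinh (l * t)).comp t h1)
  have hmono : MonotoneOn h (Set.Ici 0) := by
    apply monotoneOn_of_deriv_nonneg (convex_Ici 0)
    · exact fun t _ => (hd t).continuousAt.continuousWithinAt
    · exact fun t _ => (hd t).differentiableAt.differentiableWithinAt
    · intro t ht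
      rw [interior_Ici] at ht
      have ht' : (0:ℝ) < t := ht
      rw [(hd t).deriv]
      have hco : Real.cosh (l * t) ≤ Real.cosh t := by
        rw [Real.cosh_le_cosh, _root_.abs_of_nonneg (mul_nonneg hl0 ht'.le),
          _root_.abs_of_nonneg ht'.le]
        nlinarith
      nlinarith
  have h0y := hmono (Set.self_mem_Ici) (Set.mem_Ici.mpr hy) hy
  simp only [hh, mul_zero, Real.sinh_zero, sub_zero] at h0y
  linarith

lemma aux_ratio {t v : ℝ} (ht : t ≠ 0) (hv0 : 0 ≤ v) (hvpi : v ≤ Real.pi) :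
    0 ≤ Real.sinh (t * v) / Real.sinh (t * Real.pi) ∧
      Real.sinh (t * v) / Real.sinh (t * Real.pi) ≤ v / Real.pi := by
  have hπ := Real.pi_pos
  wlog htpos : 0 < t generalizing t
  · push_neg at htpos
    have ht' : 0 < -t := by cases ht.lt_or_gt with
      | inl h => linarith
      | inr h => exact absurd h (not_lt.mpr htpos)
    have key : Real.sinh (t * v) / Real.sinh (t * Real.pi)
        = Real.sinh (-t * v) / Real.sinh (-t * Real.pi) := by
      rw [neg_mul, neg_mul, Real.sinh_neg, Real.sinh_neg, neg_div_neg_eq]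
    rw [key]
    exact this (neg_ne_zero.2 ht) ht'
  have hden : 0 < Real.sinh (t * Real.pi) := Real.sinh_pos_iff.2 (by positivity)
  have hnum : 0 ≤ Real.sinh (t * v) := Real.sinh_nonneg_iff.2 (by positivity)
  refine ⟨div_nonneg hnum hden.le, ?_⟩
  rw [div_le_div_iff₀ hden hπ]
  have h2 := aux_sinh_convex (div_nonneg hv0 hπ.le)
    (by rw [div_le_one hπ]; exact hvpi) (by positivity : (0:ℝ) ≤ t * Real.pi)
  have h3 : v / Real.pi * (t * Real.pi) = t * v := by field_simp
  rw [h3] at h2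
  calc Real.sinh (t * v) * Real.pi ≤ (v / Real.pi * Real.sinh (t * Real.pi)) * Real.pi := by
        nlinarith
    _ = v * Real.sinh (t * Real.pi) := by field_simp

lemma aux_cpow_half {x : ℝ} (hx : 0 ≤ x) : (x:ℂ) ^ (1/2 : ℂ) = ((Real.sqrt x : ℝ) : ℂ) := by
  rw [Real.sqrt_eq_rpow, Complex.ofReal_cpow hx]
  norm_num

set_option maxHeartbeats 1000000 in
/-- For real `c > 1` and nonzero integer `n`, the function
`f_n(z) = √z · exp{π sin²(πn Log z/(2 log c)) / sinh(π²n/log c)}` belongs to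
`M_c`; in particular it differs from the principal square root somewhere on
the slit plane. -/
theorem stmt_14 (c : ℝ) (hc : 1 < c) (n : ℤ) (hn : n ≠ 0) (f : ℂ → ℂ)
    (hf : ∀ z ∈ Complex.slitPlane,
      f z = z ^ (1 / 2 : ℂ) * Complex.exp ((Real.pi : ℂ) *
        Complex.sin ((Real.pi : ℂ) * (n : ℂ) * Complex.log z /
          ((2 * Real.log c : ℝ) : ℂ)) ^ 2 /
        Complex.sinh ((Real.pi ^ 2 * (n : ℝ) / Real.log c : ℝ)))) :
    Mclass c f ∧ ∃ z ∈ Complex.slitPlane, f z ≠ z ^ (1 / 2 : ℂ) := by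
  have hπ := Real.pi_pos
  have hc0 : (0:ℝ) < c := lt_trans one_pos hc
  set L := Real.log c with hL
  have hL0 : 0 < L := Real.log_pos hc
  have hnR : ((n:ℝ)) ≠ 0 := Int.cast_ne_zero.mpr hn
  set T : ℝ := Real.pi ^ 2 * (n:ℝ) / L with hT
  have hT0 : T ≠ 0 := div_ne_zero (mul_ne_zero (pow_ne_zero 2 hπ.ne') hnR) hL0.ne'
  have hR : Real.sinh T ≠ 0 := Real.sinh_ne_zero.mpr hT0
  set s : ℝ := Real.pi * (n:ℝ) / (2 * L) with hs
  set t : ℝ := Real.pi * (n:ℝ) / L with ht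
  have hts : t = 2 * s := by rw [hs, ht]; field_simp
  have hTt : T = t * Real.pi := by rw [hT, ht]; field_simp
  have htne : t ≠ 0 := div_ne_zero (mul_ne_zero hπ.ne' hnR) hL0.ne'
  set F : ℝ → ℝ := fun x =>
    Real.sqrt x * Real.exp (Real.pi * Real.sin (s * Real.log x) ^ 2 / Real.sinh T) with hF
  -- evaluation on positive reals
  have hfr : ∀ x : ℝ, 0 < x → f (x:ℂ) = ((F x : ℝ) : ℂ) := by
    intro x hx
    have hxs : (x:ℂ) ∈ Complex.slitPlane := by
      rw [Complex.mem_slitPlane_iff]; left; simpa using hx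
    rw [hf _ hxs]
    have hlog : Complex.log (x:ℂ) = ((Real.log x : ℝ) : ℂ) := (Complex.ofReal_log hx.le).symm
    have harg : (Real.pi:ℂ) * (n:ℂ) * Complex.log (x:ℂ) / ((2*L:ℝ):ℂ)
        = ((s * Real.log x : ℝ) : ℂ) := by
      rw [hlog, hs]; push_cast; ring
    rw [aux_cpow_half hx.le, harg, ← Complex.ofReal_sin, ← Complex.ofReal_sinh, hF]
    push_cast
    ring
  -- differentiability
  have hdiff : DifferentiableOn ℂ f Complex.slitPlane := by
    have hg : DifferentiableOn ℂ (fun z => z ^ (1 / 2 : ℂ) * Complex.exp ((Real.pi : ℂ) *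
        Complex.sin ((Real.pi : ℂ) * (n : ℂ) * Complex.log z / ((2 * L : ℝ) : ℂ)) ^ 2 /
        Complex.sinh ((T : ℝ) : ℂ))) Complex.slitPlane := by
      intro z hz
      have h1 : DifferentiableAt ℂ (fun z : ℂ => z ^ (1/2 : ℂ)) z :=
        differentiableAt_id.cpow (differentiableAt_const _) hz
      have h2 : DifferentiableAt ℂ (fun z : ℂ => Complex.exp ((Real.pi : ℂ) *
          Complex.sin ((Real.pi : ℂ) * (n : ℂ) * Complex.log z / ((2 * L : ℝ) : ℂ)) ^ 2 /
          Complex.sinh ((T : ℝ) : ℂ))) z := by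
        apply DifferentiableAt.cexp
        apply DifferentiableAt.div_const
        apply DifferentiableAt.const_mul
        apply DifferentiableAt.pow
        apply DifferentiableAt.csin
        apply DifferentiableAt.div_const
        exact (Complex.differentiableAt_log hz).const_mul _
      exact (h1.mul h2).differentiableWithinAt
    exact hg.congr hf
  -- nonnegative imaginary part on the upper half-plane
  have him : ∀ z : ℂ, 0 < z.im → 0 ≤ (f z).im := by
    intro z hz
    have hzs : z ∈ Complex.slitPlane := Complex.mem_slitPlane_iff.mpr (Or.inr (ne_of_gt hz))
    have hzne : z ≠ 0 := Complex.slitPlane_ne_zero hzs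
    set w := Complex.log z with hw
    have hv0 : 0 ≤ w.im := by rw [hw, Complex.log_im]; exact Complex.arg_nonneg_iff.mpr hz.le
    have hvpi : w.im ≤ Real.pi := Complex.log_im_le_pi z
    set E : ℂ := (Real.pi:ℂ) * Complex.sin ((s:ℂ) * w) ^ 2 / ((Real.sinh T : ℝ):ℂ) with hE
    have hfe : f z = Complex.exp (w * (1/2) + E) := by
      rw [hf z hzs, Complex.cpow_def_of_ne_zero hzne, ← Complex.exp_add]
      have harg : (Real.pi:ℂ) * (n:ℂ) * Complex.log z / ((2*L:ℝ):ℂ) = (s:ℂ) * w := by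
        rw [hs, hw]; push_cast; ring
      rw [harg, ← Complex.ofReal_sinh, ← hw]
    set u := w.re with hu
    set v := w.im with hv
    have hsinval : Complex.sin ((s:ℂ) * w)
        = ((Real.sin (s*u) * Real.cosh (s*v) : ℝ) : ℂ)
          + ((Real.cos (s*u) * Real.sinh (s*v) : ℝ) : ℂ) * I := by
      have hsw : ((s:ℂ) * w) = ((s*u : ℝ):ℂ) + ((s*v : ℝ):ℂ) * I := by
        conv_lhs => rw [← Complex.re_add_im w]
        rw [← hu, ← hv]
        push_cast
        ring
      rw [hsw, Complex.sin_add, Complex.sin_mul_I, Complex.cos_mul_I]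
      push_cast
      ring
    have hEim : E.im = Real.pi / (2 * Real.sinh T) * (Real.sin (t*u) * Real.sinh (t*v)) := by
      have h2 : E = ((Real.pi / Real.sinh T : ℝ):ℂ) * Complex.sin ((s:ℂ) * w) ^ 2 := by
        rw [hE]; push_cast; ring
      have e1 : t*u = 2*(s*u) := by rw [hts]; ring
      have e2 : t*v = 2*(s*v) := by rw [hts]; ring
      have him2 : ∀ r A B : ℝ, (((r:ℝ):ℂ) * (((A:ℝ):ℂ) + ((B:ℝ):ℂ) * I) ^ 2).im
          = r * (2 * A * B) := by
        intro r A B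
        simp only [sq, Complex.add_im, Complex.add_re, Complex.mul_im, Complex.mul_re,
          Complex.ofReal_re, Complex.ofReal_im, Complex.I_re, Complex.I_im]
        ring
      rw [h2, hsinval, him2, e1, e2, Real.sin_two_mul, Real.sinh_two_mul]
      field_simp
    have hQ := aux_ratio htne hv0 hvpi
    have hR' : Real.sinh (t*Real.pi) ≠ 0 := by rw [← hTt]; exact hR
    have habs : |E.im| ≤ v / 2 := by
      rw [hEim, hTt]
      have hsin1 : |Real.sin (t*u)| ≤ 1 :=
        abs_le.mpr ⟨Real.neg_one_le_sin _, Real.sin_le_one _⟩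
      have hQ0 := hQ.1
      have hQ1 := hQ.2
      have he : Real.pi / (2 * Real.sinh (t*Real.pi)) * (Real.sin (t*u) * Real.sinh (t*v))
          = Real.pi/2 * (Real.sin (t*u) * (Real.sinh (t*v) / Real.sinh (t*Real.pi))) := by
        field_simp
      rw [he, abs_mul, abs_mul,
        _root_.abs_of_nonneg (le_of_lt (by positivity : (0:ℝ) < Real.pi/2)),
        _root_.abs_of_nonneg hQ0]
      calc Real.pi/2 * (|Real.sin (t*u)| * (Real.sinh (t*v) / Real.sinh (t*Real.pi)))
          ≤ Real.pi/2 * (1 * (v/Real.pi)) := by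
            apply mul_le_mul_of_nonneg_left _ (by positivity)
            exact mul_le_mul hsin1 hQ1 hQ0 one_pos.le
        _ = v/2 := by field_simp
    have hGim : (w * (1/2) + E).im = v/2 + E.im := by
      have h12 : ((1:ℂ)/2) = ((1/2 : ℝ):ℂ) := by norm_num
      rw [Complex.add_im, h12, Complex.mul_im]
      simp [← hv]
      ring
    rw [hfe, Complex.exp_im]
    apply mul_nonneg (Real.exp_pos _).le
    apply Real.sin_nonneg_of_nonneg_of_le_pi
    · rw [hGim]; have h := abs_le.mp habs; linarith [h.1]
    · rw [hGim]; have h := abs_le.mp habs; linarith [h.2, hvpi]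
  refine ⟨⟨⟨hdiff, fun x hx =>
      ⟨F x, mul_nonneg (Real.sqrt_nonneg x) (Real.exp_pos _).le, hfr x hx⟩, him⟩,
      ?_, ?_, ?_⟩, ?_⟩
  · -- f 1 = 1
    have h1 := hfr 1 one_pos
    rw [Complex.ofReal_one] at h1
    rw [h1]
    simp [hF, Real.log_one]
  · -- symmetry
    intro x hx
    have hx' : 0 < x⁻¹ := inv_pos.mpr hx
    have hinv : ((x:ℂ))⁻¹ = ((x⁻¹:ℝ):ℂ) := by push_cast; ring
    rw [hinv, hfr x hx, hfr _ hx', ← Complex.ofReal_mul]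
    rw [Complex.ofReal_inj]
    simp only [hF]
    have e1 : Real.sin (s * Real.log x⁻¹) ^ 2 = Real.sin (s * Real.log x) ^ 2 := by
      rw [Real.log_inv, mul_neg, Real.sin_neg]; ring
    rw [e1, Real.sqrt_inv, ← mul_assoc]
    congr 1
    have hsx : 0 < Real.sqrt x := Real.sqrt_pos.mpr hx
    field_simp
    exact Real.sq_sqrt hx.le
  · -- scaling
    intro x hx
    have hcx : 0 < c^2 * x := by positivity
    rw [hfr _ hcx, hfr _ hx, ← Complex.ofReal_mul, Complex.ofReal_inj]
    simp only [hF]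
    have elog : s * Real.log (c^2*x) = s * Real.log x + (n:ℝ) * Real.pi := by
      rw [Real.log_mul (by positivity) hx.ne', Real.log_pow, hs]
      push_cast
      field_simp
      ring
    have esin : Real.sin (s * Real.log (c^2*x)) ^ 2 = Real.sin (s * Real.log x) ^ 2 := by
      rw [elog, Real.sin_add_int_mul_pi]
      rcases Int.even_or_odd n with h | h
      · rw [h.neg_one_zpow]; ring
      · rw [h.neg_one_zpow]; ring
    have esqrt : Real.sqrt (c^2*x) = c * Real.sqrt x := by
      rw [Real.sqrt_mul (by positivity), Real.sqrt_sq hc0.le]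
    rw [esin, esqrt]
    ring
  · -- not the square root
    refine ⟨((Real.exp (L / (n:ℝ)) : ℝ) : ℂ), ?_, ?_⟩
    · rw [Complex.mem_slitPlane_iff, Complex.ofReal_re]
      exact Or.inl (Real.exp_pos _)
    · set x0 : ℝ := Real.exp (L / (n:ℝ)) with hx0def
      have hx0 : 0 < x0 := Real.exp_pos _
      rw [hfr _ hx0, aux_cpow_half hx0.le]
      intro hbad
      rw [Complex.ofReal_inj] at hbad
      have hθ : s * Real.log x0 = Real.pi / 2 := by
        rw [hx0def, Real.log_exp, hs]
        field_simp
      simp only [hF] at hbad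
      rw [hθ, Real.sin_pi_div_two] at hbad
      have hsx : 0 < Real.sqrt x0 := Real.sqrt_pos.mpr hx0
      have hexp := mul_left_cancel₀ hsx.ne' (hbad.trans (mul_one _).symm)
      rw [Real.exp_eq_one_iff] at hexp
      have hne : Real.pi * (1:ℝ)^2 / Real.sinh T ≠ 0 := by
        simp only [one_pow, mul_one]
        exact div_ne_zero hπ.ne' hR
      exact hne hexp
end
end

section
/- Let α be a nonzero real number. Then the function f_α defined on the slit plane by f_α(z) = √z · exp{ π·sin²(α·Log z) / sinh(2πα) } belongs to the Molnár class M; more precisely, f_α ∈ M_c with c = e^{π/(2|α|)}. -/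
open Complex MeasureTheory Filter

noncomputable section

lemma aux_convexOn_sinh : ConvexOn ℝ (Set.Ici (0:ℝ)) Real.sinh := by
  apply convexOn_of_deriv2_nonneg (convex_Ici 0) Real.continuous_sinh.continuousOn
    Real.differentiable_sinh.differentiableOn
  · rw [Real.deriv_sinh]; exact Real.differentiable_cosh.differentiableOn
  · intro x hx
    rw [interior_Ici, Set.mem_Ioi] at hx
    have : deriv^[2] Real.sinh = Real.sinh := by
      show deriv (deriv Real.sinh) = _
      rw [Real.deriv_sinh, Real.deriv_cosh]
    rw [this]
    exact Real.sinh_nonneg_iff.mpr hx.le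

lemma aux_sinh_frac {b θ : ℝ} (hb : 0 ≤ b) (h0 : 0 ≤ θ) (hπ : θ ≤ Real.pi) :
    Real.sinh (b * θ) ≤ θ / Real.pi * Real.sinh (b * Real.pi) := by
  have hπ0 := Real.pi_pos
  set t := θ / Real.pi with ht
  have ht0 : 0 ≤ t := div_nonneg h0 hπ0.le
  have ht1 : t ≤ 1 := (div_le_one hπ0).mpr hπ
  have := aux_convexOn_sinh.2 (Set.self_mem_Ici (a := (0:ℝ)))
    (Set.mem_Ici.mpr (mul_nonneg hb hπ0.le)) (by linarith : (0:ℝ) ≤ 1 - t) ht0 (by ring)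
  simp only [smul_eq_mul, mul_zero, Real.sinh_zero, zero_add] at this
  have hbθ : t * (b * Real.pi) = b * θ := by
    rw [ht, div_mul_eq_mul_div, div_eq_iff hπ0.ne']
    ring
  rw [hbθ] at this
  linarith

lemma aux_ratio_s15 (α : ℝ) (hα : α ≠ 0) {θ : ℝ} (h0 : 0 < θ) (hπ : θ < Real.pi) :
    |Real.sinh (2 * α * θ) / Real.sinh (2 * Real.pi * α)| ≤ θ / Real.pi := by
  have hπ0 := Real.pi_pos
  have habs : 0 < |α| := abs_pos.mpr hα
  rw [abs_div, Real.abs_sinh, Real.abs_sinh]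
  have h1 : |2 * α * θ| = 2 * |α| * θ := by
    rw [abs_mul, abs_mul]
    simp [abs_of_pos h0]
  have h2 : |2 * Real.pi * α| = 2 * |α| * Real.pi := by
    rw [abs_mul, abs_mul]
    simp [abs_of_pos hπ0]
    ring
  rw [h1, h2]
  have hden : 0 < Real.sinh (2 * |α| * Real.pi) :=
    Real.sinh_pos_iff.mpr (by positivity)
  rw [div_le_div_iff₀ hden hπ0]
  have := aux_sinh_frac (b := 2 * |α|) (by positivity) h0.le hπ.le
  rw [div_mul_eq_mul_div, le_div_iff₀ hπ0] at this
  nlinarith [this]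

lemma aux_T (α : ℝ) (hα : α ≠ 0) {θ : ℝ} (h0 : 0 < θ) (hπ : θ < Real.pi) (x : ℝ) :
    |Real.pi / Real.sinh (2 * Real.pi * α) *
      (Real.sin x * Real.cosh (α * θ) * (Real.cos x * Real.sinh (α * θ)) +
       Real.cos x * Real.sinh (α * θ) * (Real.sin x * Real.cosh (α * θ)))| ≤ θ / 2 := by
  have hπ0 := Real.pi_pos
  have hsc : |Real.sin x * Real.cos x| ≤ 1 / 2 := by
    have h := Real.abs_sin_le_one (2 * x)
    rw [Real.sin_two_mul, abs_mul, abs_mul] at h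
    norm_num at h
    rw [abs_mul]
    linarith
  have hr := aux_ratio_s15 α hα h0 hπ
  have hE : Real.pi / Real.sinh (2 * Real.pi * α) *
      (Real.sin x * Real.cosh (α * θ) * (Real.cos x * Real.sinh (α * θ)) +
       Real.cos x * Real.sinh (α * θ) * (Real.sin x * Real.cosh (α * θ)))
      = Real.pi * (Real.sin x * Real.cos x) *
        (Real.sinh (2 * α * θ) / Real.sinh (2 * Real.pi * α)) := by
    rw [show (2:ℝ) * α * θ = 2 * (α * θ) by ring, Real.sinh_two_mul]
    ring
  rw [hE]
  calc |Real.pi * (Real.sin x * Real.cos x) *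
      (Real.sinh (2 * α * θ) / Real.sinh (2 * Real.pi * α))|
      = Real.pi * (|Real.sin x * Real.cos x| *
        |Real.sinh (2 * α * θ) / Real.sinh (2 * Real.pi * α)|) := by
        rw [abs_mul, abs_mul, abs_of_pos hπ0]; ring
    _ ≤ Real.pi * (1 / 2 * (θ / Real.pi)) := by
        refine mul_le_mul_of_nonneg_left ?_ hπ0.le
        exact mul_le_mul hsc hr (abs_nonneg _) (by norm_num)
    _ = θ / 2 := by field_simp

/-- For nonzero real `α`, the function
`f_α(z) = √z · exp{π sin²(α Log z)/sinh(2πα)}` belongs to the Molnár class;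
more precisely `f_α ∈ M_c` with `c = e^{π/(2|α|)}`. -/
theorem stmt_15 (α : ℝ) (hα : α ≠ 0) (f : ℂ → ℂ)
    (hf : ∀ z ∈ Complex.slitPlane,
      f z = z ^ (1 / 2 : ℂ) * Complex.exp ((Real.pi : ℂ) *
        Complex.sin ((α : ℂ) * Complex.log z) ^ 2 /
        Complex.sinh ((2 * Real.pi * α : ℝ)))) :
    Mclass (Real.exp (Real.pi / (2 * |α|))) f ∧
    ∃ c : ℝ, 0 < c ∧ c ≠ 1 ∧ Mclass c f := by
  have hπ0 := Real.pi_pos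
  have habs : 0 < |α| := abs_pos.mpr hα
  -- value on the positive reals
  have valf : ∀ x : ℝ, 0 < x → f x = ((Real.exp (Real.log x / 2 +
      Real.pi * Real.sin (α * Real.log x) ^ 2 / Real.sinh (2 * Real.pi * α)) : ℝ) : ℂ) := by
    intro x hx
    have hx0 : (x : ℂ) ≠ 0 := by exact_mod_cast hx.ne'
    rw [hf _ (Complex.ofReal_mem_slitPlane.mpr hx), Complex.cpow_def_of_ne_zero hx0,
      ← Complex.ofReal_log hx.le, ← Complex.ofReal_sinh, ← Complex.exp_add,
      Complex.ofReal_exp]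
    congr 1
    push_cast
    ring
  -- f 1 = 1
  have hf1 : f 1 = 1 := by
    have h := valf 1 one_pos
    norm_num [Real.log_one] at h
    exact h
  -- symmetry
  have hsymm : ∀ x : ℝ, 0 < x → f (x : ℂ) = (x : ℂ) * f ((x : ℂ)⁻¹) := by
    intro x hx
    have hxi : (0:ℝ) < x⁻¹ := inv_pos.mpr hx
    have key : x * Real.exp (Real.log x⁻¹ / 2 +
        Real.pi * Real.sin (α * Real.log x⁻¹) ^ 2 / Real.sinh (2 * Real.pi * α))
        = Real.exp (Real.log x / 2 +
        Real.pi * Real.sin (α * Real.log x) ^ 2 / Real.sinh (2 * Real.pi * α)) := by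
      rw [Real.log_inv, mul_neg, Real.sin_neg, neg_sq, neg_div]
      set L := Real.log x with hL
      rw [show x = Real.exp L from (Real.exp_log hx).symm, ← Real.exp_add]
      congr 1
      ring
    rw [valf x hx, show ((x:ℂ))⁻¹ = ((x⁻¹ : ℝ) : ℂ) by push_cast; ring, valf _ hxi, ← key]
    push_cast
    ring
  -- scaling
  have hscale : ∀ x : ℝ, 0 < x →
      f ((Real.exp (Real.pi / (2 * |α|)) ^ 2 * x : ℝ) : ℂ)
        = (Real.exp (Real.pi / (2 * |α|)) : ℂ) * f (x : ℂ) := by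
    intro x hx
    have hc2 : Real.exp (Real.pi / (2 * |α|)) ^ 2 = Real.exp (Real.pi / |α|) := by
      rw [sq, ← Real.exp_add]
      congr 1
      field_simp
      ring
    have hcx : 0 < Real.exp (Real.pi / (2 * |α|)) ^ 2 * x := by positivity
    rw [valf _ hcx, valf x hx]
    have hlog : Real.log (Real.exp (Real.pi / (2 * |α|)) ^ 2 * x)
        = Real.pi / |α| + Real.log x := by
      rw [Real.log_mul (by positivity) hx.ne', hc2, Real.log_exp]
    rw [hlog]
    have hsin : Real.sin (α * (Real.pi / |α| + Real.log x)) ^ 2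
        = Real.sin (α * Real.log x) ^ 2 := by
      rcases hα.lt_or_gt with h | h
      · rw [abs_of_neg h,
          show α * (Real.pi / -α + Real.log x) = α * Real.log x - Real.pi by
            field_simp [hα]; ring, Real.sin_sub_pi, neg_sq]
      · rw [abs_of_pos h,
          show α * (Real.pi / α + Real.log x) = α * Real.log x + Real.pi by
            field_simp [hα]; ring, Real.sin_add_pi, neg_sq]
    rw [hsin]
    norm_cast
    rw [← Real.exp_add]
    congr 1
    field_simp
    ring
  -- differentiability
  have hdiff : DifferentiableOn ℂ f Complex.slitPlane := by
    have hg : DifferentiableOn ℂ (fun z : ℂ => z ^ (1 / 2 : ℂ) * Complex.exp ((Real.pi : ℂ) *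
        Complex.sin ((α : ℂ) * Complex.log z) ^ 2 /
        Complex.sinh ((2 * Real.pi * α : ℝ)))) Complex.slitPlane := by
      intro z hz
      apply DifferentiableAt.differentiableWithinAt
      have hlog : DifferentiableAt ℂ Complex.log z := Complex.differentiableAt_log hz
      have hsin : DifferentiableAt ℂ (fun z : ℂ => Complex.sin ((α : ℂ) * Complex.log z)) z :=
        Complex.differentiable_sin.differentiableAt.comp z
          ((differentiableAt_const _).mul hlog)
      exact (differentiableAt_id.cpow (differentiableAt_const _) hz).mul
        ((((differentiableAt_const _).mul (hsin.pow 2)).div_const _).cexp)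
    exact hg.congr hf
  -- nonnegative imaginary part on the upper half-plane
  have him : ∀ z : ℂ, 0 < z.im → 0 ≤ (f z).im := by
    intro z hz
    have hzs : z ∈ Complex.slitPlane := Complex.mem_slitPlane_iff.mpr (Or.inr hz.ne')
    have hz0 : z ≠ 0 := Complex.slitPlane_ne_zero hzs
    set θ := (Complex.log z).im with hθdef
    have hθarg : θ = Complex.arg z := Complex.log_im z
    have h0 : 0 < θ := by
      rw [hθarg]
      rcases (Complex.arg_nonneg_iff.mpr hz.le).lt_or_eq with h | h
      · exact h
      · exact absurd (Complex.arg_eq_zero_iff.mp h.symm).2 hz.ne'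
    have hπ' : θ < Real.pi := by
      rw [hθarg]
      rcases (Complex.arg_le_pi z).lt_or_eq with h | h
      · exact h
      · exact absurd (Complex.arg_eq_pi_iff.mp h).2 hz.ne'
    set x := α * (Complex.log z).re with hxdef
    have hT := abs_le.mp (aux_T α hα h0 hπ' x)
    have hs : Complex.sin ((α : ℂ) * Complex.log z) =
        ((Real.sin x * Real.cosh (α * θ) : ℝ) : ℂ) +
        ((Real.cos x * Real.sinh (α * θ) : ℝ) : ℂ) * Complex.I := by
      have hw : ((α : ℂ) * Complex.log z) = ((x : ℝ) : ℂ) + ((α * θ : ℝ) : ℂ) * Complex.I := by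
        simp [Complex.ext_iff, hxdef, hθdef, Complex.mul_re, Complex.mul_im]
      rw [hw, Complex.sin_add_mul_I]
      push_cast
      ring
    rw [hf z hzs, Complex.cpow_def_of_ne_zero hz0, ← Complex.ofReal_sinh]
    have hdivS : ((Real.pi : ℂ) * Complex.sin ((α : ℂ) * Complex.log z) ^ 2 /
        ((Real.sinh (2 * Real.pi * α) : ℝ) : ℂ))
        = ((Real.pi / Real.sinh (2 * Real.pi * α) : ℝ) : ℂ) *
          (Complex.sin ((α : ℂ) * Complex.log z) * Complex.sin ((α : ℂ) * Complex.log z)) := by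
      push_cast
      ring
    have hhalf : Complex.log z * (1 / 2 : ℂ) = ((1 / 2 : ℝ) : ℂ) * Complex.log z := by
      push_cast; ring
    rw [hdivS, hhalf, ← Complex.exp_add, Complex.exp_im]
    apply mul_nonneg (Real.exp_pos _).le
    have hWim : ((((1 / 2 : ℝ) : ℂ) * Complex.log z +
        ((Real.pi / Real.sinh (2 * Real.pi * α) : ℝ) : ℂ) *
          (Complex.sin ((α : ℂ) * Complex.log z) * Complex.sin ((α : ℂ) * Complex.log z))).im)
        = θ / 2 + Real.pi / Real.sinh (2 * Real.pi * α) *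
          (Real.sin x * Real.cosh (α * θ) * (Real.cos x * Real.sinh (α * θ)) +
           Real.cos x * Real.sinh (α * θ) * (Real.sin x * Real.cosh (α * θ))) := by
      rw [hs]
      simp only [Complex.add_im, Complex.add_re, Complex.mul_im, Complex.mul_re,
        Complex.ofReal_re, Complex.ofReal_im, Complex.I_re, Complex.I_im,
        mul_zero, zero_mul, mul_one, one_mul, add_zero, zero_add, sub_zero, zero_sub,
        mul_neg, neg_neg, neg_zero]
      ring
    rw [hWim]
    apply Real.sin_nonneg_of_nonneg_of_le_pi
    · linarith [hT.1]
    · linarith [hT.2]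
  have hM : Mclass (Real.exp (Real.pi / (2 * |α|))) f :=
    ⟨⟨hdiff, fun x hx => ⟨_, (Real.exp_pos _).le, valf x hx⟩, him⟩, hf1, hsymm, hscale⟩
  have hc1 : (1:ℝ) < Real.exp (Real.pi / (2 * |α|)) := by
    rw [← Real.exp_zero]
    exact Real.exp_lt_exp.mpr (by positivity)
  exact ⟨hM, Real.exp (Real.pi / (2 * |α|)), Real.exp_pos _, hc1.ne', hM⟩
end
end
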